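/- arXiv:math/9904098 — 3 statements merged into one kernel-verified Lean document; each statement's English description precedes it below -/
import Mathlib

section
/- For every coset spectral system, the modulus-one constants of the three modular data satisfy C³ = Ċ³ · C̈³. -/
open scoped BigOperators

/-- A modular datum `(I, S, ω, C)`: the genus-zero modular matrices data of §2.1. -/
structure ModularDatum (I : Type*) [Fintype I] [DecidableEq I] : Type _ where
  one : I
  bar : I → I
  bar_invol : Function.Involutive bar
  bar_one : bar one = one
  S : Matrix I I ℂ
  S_symm : ∀ i j, S i j = S j i
  S_unitary : S ∈ Matrix.unitaryGroup I ℂ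
  S_one_im : ∀ i, (S one i).im = 0
  S_one_pos : ∀ i, 0 < (S one i).re
  ω : I → ℂ
  ω_abs : ∀ i, ‖ω i‖ = 1
  ω_one : ω one = 1
  ω_bar : ∀ i, ω (bar i) = ω i
  C : ℂ
  C_abs : ‖C‖ = 1
  rel_STS : (S * Matrix.diagonal (fun i => C * ω i)) ^ 3 = S ^ 2
  rel_Ssq : ∀ i j, (S ^ 2) i j = if j = bar i then 1 else 0

/-- A coset spectral system: three modular data `(I,S,ω,C)`, `(A,Ṡ,ω̇,Ċ)`, `(X,S̈,ω̈,C̈)`,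
a nonnegative function `M` on `I × A × X` with `M(1,1,1) = 1`, and a finite spectral index
set `E` with maps `k, δ, ζ` and nonnegative weights `p`, satisfying the conclusions (a)–(d)
of Lemma A of §3.1 of the paper. -/
structure CosetSpectralSystem (I A X E : Type*)
    [Fintype I] [DecidableEq I] [Fintype A] [DecidableEq A]
    [Fintype X] [DecidableEq X] [Fintype E] : Type _ where
  G : ModularDatum I
  H : ModularDatum A
  Q : ModularDatum X
  M : I → A → X → ℝ
  M_nonneg : ∀ i α x, 0 ≤ M i α x
  M_vac : M G.one H.one Q.one = 1
  k : E → I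
  δ : E → A
  ζ : E → X
  p : E → ℝ
  p_nonneg : ∀ e, 0 ≤ p e
  spec : ∀ i α x, (M i α x : ℂ) =
    ∑ e, (G.S (G.bar i) (k e) / G.S G.one (k e)) *
         (H.S α (δ e) / H.S H.one (δ e)) *
         (Q.S x (ζ e) / Q.S Q.one (ζ e)) * (p e : ℂ)
  vac_node : ∃ e₀, k e₀ = G.one ∧ δ e₀ = H.one ∧ ζ e₀ = Q.one ∧ 0 < p e₀
  phase : ∀ j β y, M j β y ≠ 0 → Q.ω y = G.ω j * (H.ω β)⁻¹
  norm_one : ∑ j, ∑ β, ∑ y,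
    G.S G.one j * star (H.S H.one β) * star (Q.S Q.one y) * (M j β y : ℂ) = 1

/-!
Twist the normalization (d) by the phases `ω_j ω̇_β⁻¹ ω̈_y⁻¹`, which equal 1 on the support of
`M` by (c). Substituting the spectral decomposition (a) and summing over `j, β, y` with
`∑_j S_{1j} ω_j S_{jk} = C⁻³ ω_k⁻¹ S_{1k}` (the `(1,k)` entry of `STS = T⁻¹ST⁻¹`, a consequence of
`(ST)³ = S²`) turns the twisted normalization into `C⁻³ Ċ³ C̈³ ∑_e p(e) u(e)` with unimodular
`u(e) = ω_{k(e)}⁻¹ ω̇_{d(e)} ω̈_{z(e)}`. By (a) at `(1,1,1)` the weights `p` sum to 1, so `∑ p u`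
is a convex combination of points of the unit circle; since it has modulus 1, strict convexity
forces it to equal `u(e₀) = 1` for the node `e₀` of (b).
-/

theorem mul_mul_eq_of_mul_pow_three {M : Type*} [Monoid M] {s t t' : M} (hs : IsUnit s)
    (htt' : t * t' = 1) (ht't : t' * t = 1) (h : (s * t) ^ 3 = s ^ 2) :
    s * t * s = t' * s * t' := by
  have hcancel : t * s * t * s * t = s :=
    hs.mul_left_cancel (by simpa only [pow_succ, pow_zero, one_mul, mul_assoc] using h)
  calc s * t * s = t' * (t * s * t * s * t) * t' := by
        simp only [← mul_assoc, ht't, one_mul]; simp only [mul_assoc, htt', mul_one]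
    _ = t' * s * t' := by rw [hcancel]

theorem Finset.sum_sum_sum_mul_sum {J B Y E R : Type*} [Fintype J] [Fintype B] [Fintype Y]
    [Fintype E] [CommSemiring R] (a : J → R) (b : B → R) (c : Y → R)
    (f : J → E → R) (g : B → E → R) (h : Y → E → R) (q : E → R) :
    ∑ j, ∑ β, ∑ y, a j * b β * c y * ∑ e, f j e * g β e * h y e * q e
      = ∑ e, (∑ j, a j * f j e) * (∑ β, b β * g β e) * (∑ y, c y * h y e) * q e := by
  simp only [Finset.mul_sum, Finset.sum_mul,
    Finset.sum_comm (s := (univ : Finset J)) (t := (univ : Finset E)),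
    Finset.sum_comm (s := (univ : Finset B)) (t := (univ : Finset E)),
    Finset.sum_comm (s := (univ : Finset Y)) (t := (univ : Finset E)),
    Finset.sum_comm (s := (univ : Finset J)) (t := (univ : Finset B)),
    Finset.sum_comm (s := (univ : Finset J)) (t := (univ : Finset Y)),
    Finset.sum_comm (s := (univ : Finset B)) (t := (univ : Finset Y))]
  simp only [mul_comm, mul_left_comm]

theorem Complex.sum_mul_eq_one_of_norm_eq_one {E : Type*} [Fintype E] {p : E → ℝ} {u : E → ℂ}
    (hp : ∀ e, 0 ≤ p e) (hp_sum : ∑ e, p e = 1) (hu : ∀ e, ‖u e‖ = 1) {e₀ : E}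
    (hp₀ : 0 < p e₀) (hu₀ : u e₀ = 1) (hs : ‖∑ e, (p e : ℂ) * u e‖ = 1) :
    ∑ e, (p e : ℂ) * u e = 1 := by
  set s := ∑ e, (p e : ℂ) * u e
  have hre : ∑ e, p e * (starRingEnd ℂ s * u e).re = 1 := by
    calc ∑ e, p e * (starRingEnd ℂ s * u e).re = (s * starRingEnd ℂ s).re := by
          simp only [s, mul_comm _ (starRingEnd ℂ _), Finset.mul_sum, Complex.re_sum,
            mul_left_comm _ (p _ : ℂ), Complex.re_ofReal_mul]
      _ = 1 := by rw [Complex.mul_conj, Complex.normSq_eq_norm_sq, hs]; norm_num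
  have hdefect : ∀ e, 0 ≤ p e * (1 - (starRingEnd ℂ s * u e).re) := fun e =>
    mul_nonneg (hp e) (by
      have := Complex.re_le_norm (starRingEnd ℂ s * u e)
      rw [norm_mul, Complex.norm_conj, hs, hu, one_mul] at this
      linarith)
  have hzero : ∑ e, p e * (1 - (starRingEnd ℂ s * u e).re) = 0 := by
    simp only [mul_sub, mul_one, Finset.sum_sub_distrib, hp_sum, hre, sub_self]
  have h₀ := (Finset.sum_eq_zero_iff_of_nonneg fun e _ => hdefect e).1 hzero e₀
    (Finset.mem_univ _)
  rw [hu₀, mul_one, Complex.conj_re, mul_eq_zero, sub_eq_zero] at h₀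
  have hsre : s.re = ‖s‖ := by rw [hs]; exact (h₀.resolve_left hp₀.ne').symm
  rw [Complex.eq_coe_norm_of_nonneg (Complex.re_eq_norm.1 hsre), hs, ofReal_one]

namespace ModularDatum

variable {I : Type*} [Fintype I] [DecidableEq I] (D : ModularDatum I)

lemma S_one_ne_zero (j : I) : D.S D.one j ≠ 0 := fun h => by
  simpa [h] using D.S_one_pos j

lemma ω_ne_zero (i : I) : D.ω i ≠ 0 :=
  norm_ne_zero_iff.1 (by rw [D.ω_abs]; exact one_ne_zero)

lemma C_ne_zero : D.C ≠ 0 :=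
  norm_ne_zero_iff.1 (by rw [D.C_abs]; exact one_ne_zero)

lemma conj_S_one (j : I) : starRingEnd ℂ (D.S D.one j) = D.S D.one j :=
  Complex.conj_eq_iff_im.2 (D.S_one_im j)

lemma conj_ω (i : I) : starRingEnd ℂ (D.ω i) = (D.ω i)⁻¹ :=
  (RCLike.inv_eq_conj (D.ω_abs i)).symm

lemma conj_C : starRingEnd ℂ D.C = D.C⁻¹ :=
  (RCLike.inv_eq_conj D.C_abs).symm

lemma S_bar_left (j k : I) : D.S (D.bar j) k = starRingEnd ℂ (D.S j k) := by
  have h : (D.S ^ 2 * star D.S) j k = D.S j k := by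
    rw [pow_two, Matrix.mul_assoc, Matrix.mem_unitaryGroup_iff.1 D.S_unitary, Matrix.mul_one]
  simp only [Matrix.mul_apply, D.rel_Ssq, ite_mul, one_mul, zero_mul, Finset.sum_ite_eq',
    Finset.mem_univ, if_true, Matrix.star_apply] at h
  rw [D.S_symm, ← h, Complex.star_def, Complex.conj_conj]

lemma S_bar_right (j k : I) : D.S j (D.bar k) = starRingEnd ℂ (D.S j k) := by
  rw [D.S_symm, S_bar_left, D.S_symm]

lemma S_one_bar (k : I) : D.S D.one (D.bar k) = D.S D.one k := by
  rw [S_bar_right, conj_S_one]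

lemma S_mul_T_mul_S :
    D.S * Matrix.diagonal (fun i => D.C * D.ω i) * D.S
      = Matrix.diagonal (fun i => (D.C * D.ω i)⁻¹) * D.S
          * Matrix.diagonal (fun i => (D.C * D.ω i)⁻¹) := by
  have hCω : ∀ i, D.C * D.ω i ≠ 0 := fun i => mul_ne_zero D.C_ne_zero (D.ω_ne_zero i)
  refine mul_mul_eq_of_mul_pow_three (Unitary.isUnit_coe (U := ⟨D.S, D.S_unitary⟩)) ?_ ?_
    D.rel_STS <;> rw [Matrix.diagonal_mul_diagonal, ← Matrix.diagonal_one] <;> congr 1 <;> ext i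
  · exact mul_inv_cancel₀ (hCω i)
  · exact inv_mul_cancel₀ (hCω i)

lemma sum_S_one_mul_ω_mul_S (k : I) :
    ∑ j, D.S D.one j * D.ω j * D.S j k = (D.C ^ 3)⁻¹ * (D.ω k)⁻¹ * D.S D.one k := by
  have h := congrFun (congrFun D.S_mul_T_mul_S D.one) k
  simp only [Matrix.mul_diagonal, Matrix.diagonal_mul, D.ω_one, mul_one] at h
  rw [Matrix.mul_apply] at h
  simp only [Matrix.mul_diagonal] at h
  rw [← mul_right_inj' D.C_ne_zero, Finset.mul_sum]
  calc ∑ j, D.C * (D.S D.one j * D.ω j * D.S j k)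
      = ∑ j, D.S D.one j * (D.C * D.ω j) * D.S j k := Finset.sum_congr rfl fun _ _ => by ring
    _ = D.C⁻¹ * D.S D.one k * (D.C * D.ω k)⁻¹ := h
    _ = D.C * ((D.C ^ 3)⁻¹ * (D.ω k)⁻¹ * D.S D.one k) := by
      field_simp [D.C_ne_zero, D.ω_ne_zero k]

lemma sum_S_one_mul_ω_inv_mul_S (k : I) :
    ∑ j, D.S D.one j * (D.ω j)⁻¹ * D.S j k = D.C ^ 3 * D.ω k * D.S D.one k := by
  have h := congrArg (starRingEnd ℂ) (D.sum_S_one_mul_ω_mul_S (D.bar k))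
  simp only [map_sum, map_mul, map_inv₀, map_pow, conj_S_one, conj_ω, conj_C, inv_pow, inv_inv,
    S_bar_right, Complex.conj_conj, ω_bar] at h
  exact h

lemma sum_S_one_mul_ω_mul_S_bar_div (k : I) :
    ∑ j, D.S D.one j * D.ω j * (D.S (D.bar j) k / D.S D.one k) = (D.C ^ 3)⁻¹ * (D.ω k)⁻¹ := by
  have hbar : ∀ j, D.S (D.bar j) k = D.S j (D.bar k) := fun j => by
    rw [S_bar_left, S_bar_right]
  simp only [hbar, ← mul_div_assoc, ← Finset.sum_div, sum_S_one_mul_ω_mul_S, ω_bar, S_one_bar]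
  field_simp [D.S_one_ne_zero k]

lemma sum_S_one_mul_ω_inv_mul_S_div (k : I) :
    ∑ j, D.S D.one j * (D.ω j)⁻¹ * (D.S j k / D.S D.one k) = D.C ^ 3 * D.ω k := by
  simp only [← mul_div_assoc, ← Finset.sum_div, sum_S_one_mul_ω_inv_mul_S]
  field_simp [D.S_one_ne_zero k]

end ModularDatum

namespace CosetSpectralSystem

variable {I A X E : Type*} [Fintype I] [DecidableEq I] [Fintype A] [DecidableEq A]
  [Fintype X] [DecidableEq X] [Fintype E] (𝒮 : CosetSpectralSystem I A X E)

noncomputable def twistedNormalization : ℂ :=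
  ∑ j, ∑ β, ∑ y, 𝒮.G.S 𝒮.G.one j * 𝒮.G.ω j * (𝒮.H.S 𝒮.H.one β * (𝒮.H.ω β)⁻¹) *
    (𝒮.Q.S 𝒮.Q.one y * (𝒮.Q.ω y)⁻¹) * (𝒮.M j β y : ℂ)

noncomputable def nodePhase (e : E) : ℂ := (𝒮.G.ω (𝒮.k e))⁻¹ * 𝒮.H.ω (𝒮.δ e) * 𝒮.Q.ω (𝒮.ζ e)

lemma twistedNormalization_eq_one : 𝒮.twistedNormalization = 1 := by
  rw [← 𝒮.norm_one]
  refine Fintype.sum_congr _ _ fun j => Fintype.sum_congr _ _ fun β =>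
    Fintype.sum_congr _ _ fun y => ?_
  simp only [Complex.star_def, 𝒮.H.conj_S_one, 𝒮.Q.conj_S_one]
  by_cases hM : 𝒮.M j β y = 0
  · simp [hM]
  · rw [𝒮.phase j β y hM]
    field_simp [𝒮.G.ω_ne_zero j, 𝒮.H.ω_ne_zero β]

lemma twistedNormalization_eq_sum_nodePhase :
    𝒮.twistedNormalization =
      (𝒮.G.C ^ 3)⁻¹ * 𝒮.H.C ^ 3 * 𝒮.Q.C ^ 3 * ∑ e, (𝒮.p e : ℂ) * 𝒮.nodePhase e := by
  simp only [twistedNormalization, 𝒮.spec]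
  rw [Finset.sum_sum_sum_mul_sum]
  simp only [ModularDatum.sum_S_one_mul_ω_mul_S_bar_div, ModularDatum.sum_S_one_mul_ω_inv_mul_S_div,
    Finset.mul_sum, nodePhase]
  exact Fintype.sum_congr _ _ fun e => by ring

lemma sum_p_eq_one : ∑ e, 𝒮.p e = 1 := by
  have h := 𝒮.spec 𝒮.G.one 𝒮.H.one 𝒮.Q.one
  simp only [𝒮.M_vac, 𝒮.G.bar_one, div_self (𝒮.G.S_one_ne_zero _), div_self (𝒮.H.S_one_ne_zero _),
    div_self (𝒮.Q.S_one_ne_zero _), one_mul] at h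
  exact_mod_cast h.symm

lemma norm_nodePhase (e : E) : ‖𝒮.nodePhase e‖ = 1 := by
  simp [nodePhase, 𝒮.G.ω_abs, 𝒮.H.ω_abs, 𝒮.Q.ω_abs]

end CosetSpectralSystem

/-- For every coset spectral system, `C³ = Ċ³·C̈³` (the central charge
relation of Proposition 3.1). -/
theorem cosetSpectralSystem_central_charge {I A X E : Type*}
    [Fintype I] [DecidableEq I] [Fintype A] [DecidableEq A]
    [Fintype X] [DecidableEq X] [Fintype E]
    (𝒮 : CosetSpectralSystem I A X E) :
    𝒮.G.C ^ 3 = 𝒮.H.C ^ 3 * 𝒮.Q.C ^ 3 := by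
  obtain ⟨e₀, hk, hδ, hζ, hp⟩ := 𝒮.vac_node
  have hnorm := 𝒮.twistedNormalization_eq_sum_nodePhase.symm.trans 𝒮.twistedNormalization_eq_one
  have hs : ∑ e, (𝒮.p e : ℂ) * 𝒮.nodePhase e = 1 := by
    refine Complex.sum_mul_eq_one_of_norm_eq_one 𝒮.p_nonneg 𝒮.sum_p_eq_one 𝒮.norm_nodePhase hp
      (by simp [CosetSpectralSystem.nodePhase, hk, hδ, hζ, ModularDatum.ω_one]) ?_
    simpa [𝒮.G.C_abs, 𝒮.H.C_abs, 𝒮.Q.C_abs] using congrArg norm hnorm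
  rw [hs, mul_one] at hnorm
  field_simp [𝒮.G.C_ne_zero] at hnorm
  exact hnorm.symm
end

section
/- For every coset spectral system and for all (i, α, x) ∈ I × A × X one has M(i, α, x) = Σ_{j∈I} Σ_{β∈A} Σ_{y∈X} S_{ij} · conj(Ṡ_{αβ}) · conj(S̈_{xy}) · M(j, β, y). -/
open scoped BigOperators

/-!
Let `𝐒 = S ⊗ conj Ṡ ⊗ conj S̈` and `𝐓 = T ⊗ conj Ṫ ⊗ conj T̈` act on functions on `I × A × X`.
They again satisfy `𝐒² = 𝐂` (charge conjugation) and `𝐓𝐒𝐓𝐒𝐓 = 𝐒`, and the claim is `𝐒M = M`.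
By (a), `M = 𝐒* w` for a nonnegative `w`, so `N := 𝐒M = w ≥ 0`; by (c), `𝐓M = cM` with
`c = C conj Ċ conj C̈`, hence `N = c 𝐓𝐒𝐓N`. At the vacuum row, whose entries are positive and
where `N = 1` by (d), this writes `1` as a convex combination of the unimodular numbers `c² 𝐓ₜ`
over the support of `N`. So all of them equal `1`, i.e. `𝐓N = cN` and `c³ = 1`, which gives
`N = c³ M ∘ bar = M ∘ bar = 𝐒N`; as `𝐒` is invertible, `N = M`.
-/

open Matrix
open scoped ComplexOrder Kronecker

lemma Complex.div_nonneg_of_pos {a b : ℂ} (ha : 0 ≤ a) (hb : 0 < b) : 0 ≤ a / b := by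
  obtain ⟨ha_re, ha_im⟩ := Complex.nonneg_iff.mp ha
  obtain ⟨hb_re, hb_im⟩ := Complex.pos_iff.mp hb
  rw [← Complex.re_add_im a, ← Complex.re_add_im b, ← ha_im, ← hb_im]
  simpa using Complex.zero_le_real.mpr (div_nonneg ha_re hb_re.le)

lemma Complex.eq_one_of_nonneg_of_norm_eq_one {z : ℂ} (hz : 0 ≤ z) (h : ‖z‖ = 1) : z = 1 := by
  rw [← Complex.re_add_im z, ← (Complex.nonneg_iff.mp hz).2, Complex.re_eq_norm.mpr hz, h]
  simp

lemma Complex.mul_eq_self_of_sum_mul_eq_sum {ι : Type*} [Fintype ι] {w z : ι → ℂ}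
    (hw : ∀ t, 0 ≤ w t) (hz : ∀ t, ‖z t‖ ≤ 1) (h : ∑ t, w t * z t = ∑ t, w t) (t : ι) :
    w t * z t = w t := by
  have hw_im : ∀ t, (w t).im = 0 := fun t => ((Complex.nonneg_iff.mp (hw t)).2).symm
  have hz_re : ∀ t, (z t).re ≤ 1 := fun t => (Complex.re_le_norm _).trans (hz t)
  have hsum : ∑ t, (w t).re * (1 - (z t).re) = 0 := by
    have := congrArg Complex.re h
    simp only [Complex.re_sum, Complex.mul_re, hw_im, zero_mul, sub_zero] at this
    simp [mul_sub, Finset.sum_sub_distrib, this]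
  have hterm := (Finset.sum_eq_zero_iff_of_nonneg fun t _ =>
    mul_nonneg (Complex.nonneg_iff.mp (hw t)).1 (sub_nonneg.mpr (hz_re t))).mp hsum t
    (Finset.mem_univ t)
  rcases mul_eq_zero.mp hterm with hw0 | hz1
  · rw [show w t = 0 from Complex.ext hw0 (hw_im t), zero_mul]
  · have hnorm : ‖z t‖ = 1 :=
      le_antisymm (hz t) (by simpa [sub_eq_zero.mp hz1] using Complex.re_le_norm (z t))
    have hz_nonneg : 0 ≤ z t := Complex.re_eq_norm.mp (by rw [hnorm]; linarith)
    rw [Complex.eq_one_of_nonneg_of_norm_eq_one hz_nonneg hnorm, mul_one]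

section ChargeMatrix

variable {ι κ R : Type*} [DecidableEq ι] [DecidableEq κ]

def chargeMatrix [Zero R] [One R] (σ : ι → ι) : Matrix ι ι R :=
  of fun i j => if j = σ i then 1 else 0

@[simp]
lemma chargeMatrix_apply [Zero R] [One R] (σ : ι → ι) (i j : ι) :
    (chargeMatrix σ : Matrix ι ι R) i j = if j = σ i then 1 else 0 := rfl

lemma chargeMatrix_mulVec [Fintype ι] [NonAssocSemiring R] (σ : ι → ι) (v : ι → R) :
    chargeMatrix σ *ᵥ v = v ∘ σ := by
  ext i
  simp [mulVec, dotProduct]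

lemma chargeMatrix_kronecker [MulZeroOneClass R] (σ : ι → ι) (π : κ → κ) :
    (chargeMatrix σ : Matrix ι ι R) ⊗ₖ chargeMatrix π = chargeMatrix (Prod.map σ π) := by
  ext ⟨i, k⟩ ⟨j, l⟩
  simp only [kroneckerMap_apply, chargeMatrix_apply, Prod.map_apply, Prod.mk.injEq]
  split_ifs <;> simp_all

lemma chargeMatrix_map_star [Semiring R] [StarRing R] (σ : ι → ι) :
    (chargeMatrix σ : Matrix ι ι R).map star = chargeMatrix σ := by
  ext i j
  simp [apply_ite star]

end ChargeMatrix

lemma Matrix.map_star_mul {ι : Type*} [Fintype ι] (A B : Matrix ι ι ℂ) :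
    (A * B).map star = A.map star * B.map star :=
  Matrix.map_mul (f := starRingEnd ℂ)

lemma Matrix.diagonal_mulVec_eq_smul {ι : Type*} [Fintype ι] [DecidableEq ι] {τ v : ι → ℂ}
    {c : ℂ} (h : ∀ t, τ t * v t = c * v t) : diagonal τ *ᵥ v = c • v := by
  ext t
  simp [mulVec_diagonal, h]

/-- `S` and `T = diagonal τ` satisfy the modular relations `S² = C` and `(ST)³ = S²`, the latter
in the equivalent form `TSTST = S`; here `C = chargeMatrix σ` is the charge conjugation. -/
structure IsModularSTPair {ι : Type*} [Fintype ι] [DecidableEq ι]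
    (S : Matrix ι ι ℂ) (σ : ι → ι) (τ : ι → ℂ) : Prop where
  mem_unitaryGroup : S ∈ unitaryGroup ι ℂ
  mul_self : S * S = chargeMatrix σ
  norm_eq_one : ∀ i, ‖τ i‖ = 1
  comp_charge : ∀ i, τ (σ i) = τ i
  braid : diagonal τ * S * diagonal τ * S * diagonal τ = S

namespace IsModularSTPair

variable {ι κ : Type*} [Fintype ι] [DecidableEq ι] [Fintype κ] [DecidableEq κ]
  {S : Matrix ι ι ℂ} {σ : ι → ι} {τ : ι → ℂ}

lemma map_star (h : IsModularSTPair S σ τ) : IsModularSTPair (S.map star) σ (star τ) where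
  mem_unitaryGroup := map_star_mem_unitaryGroup_iff.mpr h.mem_unitaryGroup
  mul_self := by rw [← Matrix.map_star_mul, h.mul_self, chargeMatrix_map_star]
  norm_eq_one i := by simpa using h.norm_eq_one i
  comp_charge i := by simp [h.comp_charge i]
  braid := by simp only [← map_diagonal_star, ← Matrix.map_star_mul, h.braid]

lemma kronecker {S' : Matrix κ κ ℂ} {σ' : κ → κ} {τ' : κ → ℂ} (h : IsModularSTPair S σ τ)
    (h' : IsModularSTPair S' σ' τ') :
    IsModularSTPair (S ⊗ₖ S') (Prod.map σ σ') (fun t => τ t.1 * τ' t.2) where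
  mem_unitaryGroup := kronecker_mem_unitary h.mem_unitaryGroup h'.mem_unitaryGroup
  mul_self := by rw [← mul_kronecker_mul, h.mul_self, h'.mul_self, chargeMatrix_kronecker]
  norm_eq_one t := by simp [h.norm_eq_one, h'.norm_eq_one]
  comp_charge t := by simp [h.comp_charge, h'.comp_charge]
  braid := by simp only [← diagonal_kronecker_diagonal, ← mul_kronecker_mul, h.braid, h'.braid]

lemma mulVec_mulVec_self (h : IsModularSTPair S σ τ) (v : ι → ℂ) : S *ᵥ (S *ᵥ v) = v ∘ σ := by
  rw [mulVec_mulVec, h.mul_self, chargeMatrix_mulVec]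

lemma mulVec_injective (h : IsModularSTPair S σ τ) : Function.Injective (S *ᵥ ·) :=
  mulVec_injective_of_isUnit (Unitary.isUnit_coe (U := ⟨S, h.mem_unitaryGroup⟩))

lemma mulVec_eq_smul_of_phase (h : IsModularSTPair S σ τ) {m : ι → ℂ} {c : ℂ}
    (hphase : ∀ t, τ t * m t = c * m t) :
    S *ᵥ m = c • (diagonal τ *ᵥ (S *ᵥ (diagonal τ *ᵥ (S *ᵥ m)))) := by
  conv_lhs => rw [← h.braid]
  simp only [← mulVec_mulVec, diagonal_mulVec_eq_smul hphase, mulVec_smul]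

theorem mulVec_eq_self (h : IsModularSTPair S σ τ) {m : ι → ℂ} {o : ι} (ho : σ o = o)
    (hm : m o ≠ 0) (hSm : (S *ᵥ m) o = m o) (hphase : ∀ t, τ t * m t = τ o * m t)
    (hSo : ∀ t, 0 < S o t) (hSm_nonneg : ∀ t, 0 ≤ (S *ᵥ m) t) : S *ᵥ m = m := by
  set N := S *ᵥ m
  set c := τ o
  have hN : N = c • (diagonal τ *ᵥ (S *ᵥ (diagonal τ *ᵥ N))) := h.mulVec_eq_smul_of_phase hphase
  have hSN : S *ᵥ N = m ∘ σ := h.mulVec_mulVec_self m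
  have hconv : ∀ t, S o t * N t * (c ^ 2 * τ t) = S o t * N t := by
    refine Complex.mul_eq_self_of_sum_mul_eq_sum
      (fun t => mul_nonneg (hSo t).le (hSm_nonneg t)) (fun t => by simp [h.norm_eq_one, c]) ?_
    calc ∑ t, S o t * N t * (c ^ 2 * τ t) = c * (c * ∑ t, S o t * (τ t * N t)) := by
          simp only [Finset.mul_sum]
          exact Finset.sum_congr rfl fun t _ => by ring
      _ = N o := by
          conv_rhs => rw [hN]
          rw [Pi.smul_apply, mulVec_diagonal, smul_eq_mul]
          congr 2
          exact Finset.sum_congr rfl fun t _ => by rw [mulVec_diagonal]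
      _ = (S *ᵥ N) o := by rw [hSm, hSN, Function.comp_apply, ho]
  have hunit : ∀ t, N t ≠ 0 → c ^ 2 * τ t = 1 := fun t hNt =>
    (mul_eq_left₀ (mul_ne_zero (hSo t).ne' hNt)).mp (hconv t)
  have hc : c ^ 3 = 1 := by
    rw [pow_succ]
    exact hunit o (hSm ▸ hm)
  have hτN : ∀ t, τ t * N t = c * N t := by
    intro t
    by_cases hNt : N t = 0
    · simp [hNt]
    · linear_combination (-(τ t) * N t) * hc + (c * N t) * hunit t hNt
  have hτmσ : ∀ t, τ t * (m ∘ σ) t = c * (m ∘ σ) t := fun t => by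
    rw [Function.comp_apply, ← h.comp_charge t, hphase]
  have hNσ : N = m ∘ σ :=
    calc N = c • (diagonal τ *ᵥ (S *ᵥ (diagonal τ *ᵥ N))) := hN
      _ = c ^ 3 • (m ∘ σ) := by
          rw [diagonal_mulVec_eq_smul hτN, mulVec_smul, hSN, mulVec_smul,
            diagonal_mulVec_eq_smul hτmσ, smul_smul, smul_smul]
          ring_nf
      _ = m ∘ σ := by rw [hc, one_smul]
  exact h.mulVec_injective (hSN.trans hNσ.symm)

end IsModularSTPair

lemma Matrix.mulVec_nonneg_of_eq_sum_star {ι E : Type*} [Fintype ι] [DecidableEq ι] [Fintype E]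
    {U : Matrix ι ι ℂ} (hU : U ∈ unitaryGroup ι ℂ) (f : E → ι) {q : E → ℂ} (hq : ∀ e, 0 ≤ q e)
    {m : ι → ℂ} (hm : ∀ s, m s = ∑ e, star (U (f e) s) * q e) (s : ι) : 0 ≤ (U *ᵥ m) s := by
  have hUm : (U *ᵥ m) s = ∑ e, (U * star U) s (f e) * q e := by
    simp only [mulVec, dotProduct, hm, mul_apply, star_apply, Finset.mul_sum, Finset.sum_mul]
    rw [Finset.sum_comm]
    exact Finset.sum_congr rfl fun e _ => Finset.sum_congr rfl fun t _ => by ring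
  rw [hUm, mem_unitaryGroup_iff.mp hU]
  refine Finset.sum_nonneg fun e _ => ?_
  rw [one_apply]
  split_ifs
  · simpa using hq e
  · simp

namespace ModularDatum

variable {I : Type*} [Fintype I] [DecidableEq I] (D : ModularDatum I)

lemma S_mul_S : D.S * D.S = chargeMatrix D.bar := by
  ext i j
  rw [← pow_two, D.rel_Ssq, chargeMatrix_apply]

lemma braid :
    diagonal (fun i => D.C * D.ω i) * D.S * diagonal (fun i => D.C * D.ω i) * D.S *
      diagonal (fun i => D.C * D.ω i) = D.S := by
  set T := diagonal (fun i => D.C * D.ω i)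
  have hS : star D.S * D.S = 1 := mem_unitaryGroup_iff'.mp D.S_unitary
  calc T * D.S * T * D.S * T = star D.S * D.S * (T * D.S * T * D.S * T) := by rw [hS, one_mul]
    _ = star D.S * (D.S * T) ^ 3 := by simp only [pow_three, mul_assoc]
    _ = D.S := by rw [D.rel_STS, pow_two, ← mul_assoc, hS, one_mul]

lemma isModularSTPair : IsModularSTPair D.S D.bar (fun i => D.C * D.ω i) where
  mem_unitaryGroup := D.S_unitary
  mul_self := D.S_mul_S
  norm_eq_one i := by simp [D.C_abs, D.ω_abs]
  comp_charge i := by rw [D.ω_bar]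
  braid := D.braid

lemma star_S_eq_chargeMatrix_mul : star D.S = chargeMatrix D.bar * D.S := by
  have hP : chargeMatrix D.bar * chargeMatrix D.bar = (1 : Matrix I I ℂ) := by
    ext i j
    simp only [mul_apply, chargeMatrix_apply, ite_mul, one_mul, zero_mul, Finset.sum_ite_eq',
      Finset.mem_univ, if_true, D.bar_invol i, one_apply, eq_comm]
  have hS : star D.S * D.S = 1 := mem_unitaryGroup_iff'.mp D.S_unitary
  calc star D.S = star D.S * (chargeMatrix D.bar * chargeMatrix D.bar) := by rw [hP, mul_one]
    _ = star D.S * D.S * (D.S * (D.S * D.S)) := by rw [← D.S_mul_S]; simp only [mul_assoc]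
    _ = chargeMatrix D.bar * D.S := by rw [hS, one_mul, ← mul_assoc, D.S_mul_S]

lemma S_bar_apply (i j : I) : D.S (D.bar i) j = star (D.S i j) := by
  have h := congrFun (congrFun D.star_S_eq_chargeMatrix_mul i) j
  simp only [star_apply, mul_apply, chargeMatrix_apply, ite_mul, one_mul, zero_mul,
    Finset.sum_ite_eq', Finset.mem_univ, if_true] at h
  rw [← h, D.S_symm]

lemma zero_lt_S_one (i : I) : 0 < D.S D.one i :=
  Complex.pos_iff.mpr ⟨D.S_one_pos i, (D.S_one_im i).symm⟩

lemma star_S_one (i : I) : star (D.S D.one i) = D.S D.one i :=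
  Complex.conj_eq_iff_im.mpr (D.S_one_im i)

end ModularDatum

namespace CosetSpectralSystem

variable {I A X E : Type*} [Fintype I] [DecidableEq I] [Fintype A] [DecidableEq A]
  [Fintype X] [DecidableEq X] [Fintype E] (𝒮 : CosetSpectralSystem I A X E)

def cosetS : Matrix (I × A × X) (I × A × X) ℂ :=
  𝒮.G.S ⊗ₖ (𝒮.H.S.map star ⊗ₖ 𝒮.Q.S.map star)

def cosetT (t : I × A × X) : ℂ :=
  𝒮.G.C * 𝒮.G.ω t.1 * (star (𝒮.H.C * 𝒮.H.ω t.2.1) * star (𝒮.Q.C * 𝒮.Q.ω t.2.2))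

def vac : I × A × X := (𝒮.G.one, 𝒮.H.one, 𝒮.Q.one)

def node (e : E) : I × A × X := (𝒮.k e, 𝒮.δ e, 𝒮.ζ e)

def mVec (t : I × A × X) : ℂ := 𝒮.M t.1 t.2.1 t.2.2

lemma isModularSTPair_cosetS :
    IsModularSTPair 𝒮.cosetS (Prod.map 𝒮.G.bar (Prod.map 𝒮.H.bar 𝒮.Q.bar)) 𝒮.cosetT :=
  𝒮.G.isModularSTPair.kronecker
    (𝒮.H.isModularSTPair.map_star.kronecker 𝒮.Q.isModularSTPair.map_star)

lemma cosetS_apply (s t : I × A × X) :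
    𝒮.cosetS s t = 𝒮.G.S s.1 t.1 * star (𝒮.H.S s.2.1 t.2.1) * star (𝒮.Q.S s.2.2 t.2.2) := by
  simp [cosetS, mul_assoc]

lemma cosetS_mulVec_mVec_apply (i : I) (α : A) (x : X) :
    (𝒮.cosetS *ᵥ 𝒮.mVec) (i, α, x) = ∑ j, ∑ β, ∑ y,
      𝒮.G.S i j * star (𝒮.H.S α β) * star (𝒮.Q.S x y) * (𝒮.M j β y : ℂ) := by
  simp only [mulVec, dotProduct, Fintype.sum_prod_type, cosetS_apply, mVec]

lemma zero_lt_cosetS_vac (t : I × A × X) : 0 < 𝒮.cosetS 𝒮.vac t := by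
  rw [cosetS_apply, vac, 𝒮.H.star_S_one, 𝒮.Q.star_S_one]
  exact mul_pos (mul_pos (𝒮.G.zero_lt_S_one _) (𝒮.H.zero_lt_S_one _)) (𝒮.Q.zero_lt_S_one _)

lemma cosetT_mul_mVec (t : I × A × X) : 𝒮.cosetT t * 𝒮.mVec t = 𝒮.cosetT 𝒮.vac * 𝒮.mVec t := by
  obtain ⟨j, β, y⟩ := t
  by_cases hM : 𝒮.M j β y = 0
  · simp [mVec, hM]
  have star_eq_inv : ∀ z : ℂ, ‖z‖ = 1 → star z = z⁻¹ := fun z hz => (Complex.inv_eq_conj hz).symm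
  have hj : 𝒮.G.ω j ≠ 0 := norm_ne_zero_iff.mp (by simp [𝒮.G.ω_abs])
  have hβ : 𝒮.H.ω β ≠ 0 := norm_ne_zero_iff.mp (by simp [𝒮.H.ω_abs])
  simp only [cosetT, vac, 𝒮.phase j β y hM, star_mul', star_inv₀, star_eq_inv _ (𝒮.G.ω_abs j),
    star_eq_inv _ (𝒮.H.ω_abs β), inv_inv, 𝒮.G.ω_one, 𝒮.H.ω_one, 𝒮.Q.ω_one, mul_one]
  field_simp

lemma mVec_eq_sum_star (s : I × A × X) :
    𝒮.mVec s = ∑ e, star (𝒮.cosetS (𝒮.node e) s) * ((𝒮.p e : ℂ) / 𝒮.cosetS 𝒮.vac (𝒮.node e)) := by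
  rw [mVec, 𝒮.spec]
  refine Finset.sum_congr rfl fun e _ => ?_
  simp only [node, vac, cosetS_apply, 𝒮.G.S_bar_apply, 𝒮.H.star_S_one, 𝒮.Q.star_S_one, star_mul',
    star_star, 𝒮.G.S_symm (𝒮.k e), 𝒮.H.S_symm (𝒮.δ e), 𝒮.Q.S_symm (𝒮.ζ e)]
  ring

end CosetSpectralSystem

/-- Proposition 3.1 (1):
`M(i,α,x) = Σ_{j,β,y} S_{ij} conj(Ṡ_{αβ}) conj(S̈_{xy}) M(j,β,y)`. -/
theorem cosetSpectralSystem_prop31_one {I A X E : Type*}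
    [Fintype I] [DecidableEq I] [Fintype A] [DecidableEq A]
    [Fintype X] [DecidableEq X] [Fintype E]
    (𝒮 : CosetSpectralSystem I A X E) (i : I) (α : A) (x : X) :
    (𝒮.M i α x : ℂ) = ∑ j, ∑ β, ∑ y,
      𝒮.G.S i j * star (𝒮.H.S α β) * star (𝒮.Q.S x y) * (𝒮.M j β y : ℂ) := by
  have hpair := 𝒮.isModularSTPair_cosetS
  have hweight (e : E) : 0 ≤ (𝒮.p e : ℂ) / 𝒮.cosetS 𝒮.vac (𝒮.node e) :=
    Complex.div_nonneg_of_pos (Complex.zero_le_real.mpr (𝒮.p_nonneg e)) (𝒮.zero_lt_cosetS_vac _)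
  have hfix : 𝒮.cosetS *ᵥ 𝒮.mVec = 𝒮.mVec :=
    hpair.mulVec_eq_self (o := 𝒮.vac)
      (by simp [CosetSpectralSystem.vac, 𝒮.G.bar_one, 𝒮.H.bar_one, 𝒮.Q.bar_one])
      (by simp [CosetSpectralSystem.mVec, CosetSpectralSystem.vac, 𝒮.M_vac])
      (by rw [CosetSpectralSystem.vac, 𝒮.cosetS_mulVec_mVec_apply, 𝒮.norm_one]
          simp [CosetSpectralSystem.mVec, 𝒮.M_vac])
      𝒮.cosetT_mul_mVec 𝒮.zero_lt_cosetS_vac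
      (mulVec_nonneg_of_eq_sum_star hpair.mem_unitaryGroup 𝒮.node hweight 𝒮.mVec_eq_sum_star)
  rw [← 𝒮.cosetS_mulVec_mVec_apply]
  exact (congrFun hfix (i, α, x)).symm
end

section
/- Let (A, Ṡ, ω̇, Ċ) be a modular datum, let I be a finite index set, and let X : A × A → ℝ and B : I × A → ℝ be functions with X(μ, λ) ≥ 0 and B(i, λ) ≥ 0 for all arguments. Let E be a finite index set with maps m : E → A, l : E → A and weights p : E → ℝ with p(e) ≥ 0 and Σ_{e∈E} p(e) = 1, and assume: (a) X(μ, λ) = Σ_{e∈E} (Ṡ_{μ̄, m(e)}/Ṡ_{1, m(e)}) · (Ṡ_{λ, l(e)}/Ṡ_{1, l(e)}) · p(e) for all μ, λ ∈ A (where μ̄ denotes the involution applied to μ); (b) X(μ, λ) ≠ 0 implies ω̇_μ = ω̇_λ; (c) X(μ, λ) ≥ Σ_{i∈I} B(i, μ) · B(i, λ) for all μ, λ ∈ A; (d) Σ_{i∈I} Σ_{μ∈A} Σ_{λ∈A} Ṡ_{1μ} · B(i, μ) · B(i, λ) · Ṡ_{1λ} = 1. Then X(μ, λ) = Σ_{i∈I}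 B(i, μ) · B(i, λ) for all μ, λ ∈ A. -/
open scoped BigOperators

/-! Write `s μ = Ṡ_{1μ} > 0` and `t μ = Ċ ω̇_μ`. The modular relation `(ṠṪ)³ = Ṡ²` gives
`ṠṪṠ = Ṫ⁻¹ṠṪ⁻¹`, whose `(1, ν)` entry says that `∑_μ s_μ t_μ Ṡ_{μν}` has modulus `s_ν`.
By (b) the phases `t_μ t̄_λ` may be inserted into `∑_{μ,λ} s_μ X(μ,λ) s_λ` at no cost, and then (a)
splits it into a convex combination of products of two such normalized sums, so it is at most `1`.
By (d) the same form evaluated on `∑_i B(i,μ) B(i,λ)` equals `1`, so the inequality (c) has a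
nonnegative defect with vanishing positively weighted sum, hence no defect at all. -/

lemma eq_of_le_of_sum_mul_mul_le {ι : Type*} [Fintype ι] {w : ι → ℝ} (hw : ∀ i, 0 < w i)
    {X Y : ι → ι → ℝ} (hle : ∀ i j, Y i j ≤ X i j)
    (hsum : ∑ i, ∑ j, w i * X i j * w j ≤ ∑ i, ∑ j, w i * Y i j * w j) (i j : ι) :
    X i j = Y i j := by
  by_contra hne
  have hmono : ∀ i j, w i * Y i j * w j ≤ w i * X i j * w j := fun i j =>
    mul_le_mul_of_nonneg_right (mul_le_mul_of_nonneg_left (hle i j) (hw i).le) (hw j).le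
  have hlt : w i * Y i j * w j < w i * X i j * w j :=
    mul_lt_mul_of_pos_right (mul_lt_mul_of_pos_left ((hle i j).lt_of_ne' hne) (hw i)) (hw j)
  have : ∑ i, ∑ j, w i * Y i j * w j < ∑ i, ∑ j, w i * X i j * w j :=
    Finset.sum_lt_sum (fun i _ => Finset.sum_le_sum fun j _ => hmono i j)
      ⟨i, Finset.mem_univ i, Finset.sum_lt_sum (fun j _ => hmono i j) ⟨j, Finset.mem_univ j, hlt⟩⟩
  linarith

namespace ModularDatum

variable {A : Type*} [Fintype A] [DecidableEq A] (H : ModularDatum A)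

lemma star_S_mul_S : star H.S * H.S = 1 :=
  Matrix.mem_unitaryGroup_iff'.mp H.S_unitary

lemma conj_S_apply (μ ν : A) : starRingEnd ℂ (H.S μ ν) = H.S (H.bar μ) ν := by
  calc starRingEnd ℂ (H.S μ ν) = (star H.S * H.S ^ 2) ν (H.bar μ) := by
        simp only [Matrix.mul_apply, H.rel_Ssq, H.bar_invol.injective.eq_iff, mul_ite, mul_one,
          mul_zero, Finset.sum_ite_eq, Finset.mem_univ, if_true, Matrix.star_apply, H.S_symm μ ν]
        rfl
    _ = H.S (H.bar μ) ν := by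
        rw [sq, ← mul_assoc, H.star_S_mul_S, one_mul, H.S_symm]

noncomputable def s (μ : A) : ℝ := (H.S H.one μ).re

lemma S_one_eq (μ : A) : H.S H.one μ = H.s μ :=
  Complex.ext rfl (by simp [H.S_one_im])

lemma s_pos (μ : A) : 0 < H.s μ := H.S_one_pos μ

lemma s_bar (μ : A) : H.s (H.bar μ) = H.s μ := by
  rw [s, H.S_symm, ← H.conj_S_apply, Complex.conj_re, H.S_symm]
  rfl

noncomputable def t (μ : A) : ℂ := H.C * H.ω μ

lemma t_bar (μ : A) : H.t (H.bar μ) = H.t μ := by rw [t, t, H.ω_bar]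

lemma norm_t (μ : A) : ‖H.t μ‖ = 1 := by rw [t, norm_mul, H.C_abs, H.ω_abs, one_mul]

lemma conj_t_mul_t (μ : A) : starRingEnd ℂ (H.t μ) * H.t μ = 1 := by
  rw [Complex.conj_mul', H.norm_t, Complex.ofReal_one, one_pow]

noncomputable def T : Matrix A A ℂ := Matrix.diagonal H.t

lemma star_T : star H.T = Matrix.diagonal fun μ => starRingEnd ℂ (H.t μ) := by
  rw [T, Matrix.star_eq_conjTranspose, Matrix.diagonal_conjTranspose]
  rfl

lemma star_T_mul_T : star H.T * H.T = 1 := by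
  rw [star_T, T, Matrix.diagonal_mul_diagonal]
  simp only [H.conj_t_mul_t, Matrix.diagonal_one]

lemma S_mul_T_mul_S_s16 : H.S * H.T * H.S = star H.T * H.S * star H.T := by
  have hTT : H.T * star H.T = 1 := mul_eq_one_comm.mp H.star_T_mul_T
  have h : H.S * (H.T * H.S * H.T * H.S * H.T) = H.S * H.S := by
    have h3 : (H.S * H.T) ^ 3 = H.S ^ 2 := H.rel_STS
    simpa only [pow_succ, pow_zero, one_mul, mul_assoc] using h3
  have h' : H.T * H.S * H.T * H.S * H.T = H.S := by
    simpa only [← mul_assoc, H.star_S_mul_S, one_mul] using congrArg (star H.S * ·) h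
  calc H.S * H.T * H.S = star H.T * (H.T * H.S * H.T * H.S * H.T) * star H.T := by
        simp only [← mul_assoc, H.star_T_mul_T, one_mul]
        simp only [mul_assoc, hTT, mul_one]
    _ = star H.T * H.S * star H.T := by rw [h']

lemma sum_S_one_mul_t_mul_S (ν : A) :
    ∑ μ, H.S H.one μ * H.t μ * H.S μ ν =
      starRingEnd ℂ H.C * H.S H.one ν * starRingEnd ℂ (H.t ν) := by
  have h := congrFun (congrFun H.S_mul_T_mul_S_s16 H.one) ν
  rw [star_T, Matrix.mul_diagonal, Matrix.diagonal_mul, Matrix.mul_apply] at h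
  simpa only [T, Matrix.mul_diagonal, t, H.ω_one, mul_one] using h

lemma norm_sum_S_one_mul_t_mul_S (ν : A) :
    ‖∑ μ, H.S H.one μ * H.t μ * H.S μ ν‖ = H.s ν := by
  rw [H.sum_S_one_mul_t_mul_S, norm_mul, norm_mul, Complex.norm_conj, Complex.norm_conj, H.C_abs,
    H.norm_t, H.S_one_eq, Complex.norm_real, Real.norm_of_nonneg (H.s_pos ν).le, one_mul, mul_one]

lemma norm_sum_S_one_mul_t_mul_S_bar_div (ν : A) :
    ‖(∑ μ, H.S H.one μ * H.t μ * H.S (H.bar μ) ν) / H.S H.one ν‖ = 1 := by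
  have h : ∑ μ, H.S H.one μ * H.t μ * H.S (H.bar μ) ν = ∑ μ, H.S H.one μ * H.t μ * H.S μ ν :=
    Fintype.sum_bijective H.bar H.bar_invol.bijective _ _ fun μ => by
      rw [H.S_one_eq, H.S_one_eq, H.s_bar, H.t_bar]
  rw [h, norm_div, H.norm_sum_S_one_mul_t_mul_S, H.S_one_eq, Complex.norm_real,
    Real.norm_of_nonneg (H.s_pos ν).le, div_self (H.s_pos ν).ne']

lemma norm_sum_S_one_mul_conj_t_mul_S_div (ν : A) :
    ‖(∑ μ, H.S H.one μ * starRingEnd ℂ (H.t μ) * H.S μ ν) / H.S H.one ν‖ = 1 := by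
  have h : ∑ μ, H.S H.one μ * starRingEnd ℂ (H.t μ) * H.S μ ν =
      starRingEnd ℂ (∑ μ, H.S H.one μ * H.t μ * H.S (H.bar μ) ν) := by
    simp only [map_sum, map_mul, ← H.conj_S_apply, Complex.conj_conj, H.S_one_eq, Complex.conj_ofReal]
  rw [h, norm_div, Complex.norm_conj, ← norm_div, H.norm_sum_S_one_mul_t_mul_S_bar_div]

variable {E : Type*} [Fintype E]

lemma sum_s_mul_mul_s_le_sum (X : A → A → ℝ) (m l : E → A) (p : E → ℝ)
    (hp : ∀ e, 0 ≤ p e)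
    (ha : ∀ μ lam, (X μ lam : ℂ) =
      ∑ e, (H.S (H.bar μ) (m e) / H.S H.one (m e)) * (H.S lam (l e) / H.S H.one (l e)) * (p e : ℂ))
    (hb : ∀ μ lam, X μ lam ≠ 0 → H.ω μ = H.ω lam) :
    ∑ μ, ∑ lam, H.s μ * X μ lam * H.s lam ≤ ∑ e, p e := by
  have hphase : ∀ μ lam, (H.s μ * X μ lam * H.s lam : ℂ) =
      H.S H.one μ * H.t μ * X μ lam * (H.S H.one lam * starRingEnd ℂ (H.t lam)) := by
    intro μ lam
    by_cases hX : X μ lam = 0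
    · simp [hX]
    · have ht : H.t μ = H.t lam := by rw [t, t, hb μ lam hX]
      rw [H.S_one_eq, H.S_one_eq, ht]
      linear_combination -(H.s μ * X μ lam * H.s lam : ℂ) * H.conj_t_mul_t lam
  have hterm : ∀ μ lam, (H.s μ * X μ lam * H.s lam : ℂ) =
      ∑ e, H.S H.one μ * H.t μ * H.S (H.bar μ) (m e) / H.S H.one (m e) *
        (H.S H.one lam * starRingEnd ℂ (H.t lam) * H.S lam (l e) / H.S H.one (l e)) * p e := by
    intro μ lam
    rw [hphase, ha, Finset.mul_sum, Finset.sum_mul]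
    exact Finset.sum_congr rfl fun e _ => by ring
  have hexpand : ((∑ μ, ∑ lam, H.s μ * X μ lam * H.s lam : ℝ) : ℂ) =
      ∑ e, (∑ μ, H.S H.one μ * H.t μ * H.S (H.bar μ) (m e)) / H.S H.one (m e) *
        ((∑ lam, H.S H.one lam * starRingEnd ℂ (H.t lam) * H.S lam (l e)) / H.S H.one (l e)) *
        p e := by
    push_cast
    simp_rw [hterm, Finset.sum_div, Finset.sum_mul_sum, Finset.sum_mul]
    exact Finset.sum_comm_cycle
  calc ∑ μ, ∑ lam, H.s μ * X μ lam * H.s lam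
      ≤ ‖((∑ μ, ∑ lam, H.s μ * X μ lam * H.s lam : ℝ) : ℂ)‖ := by
        rw [Complex.norm_real]; exact le_abs_self _
    _ ≤ ∑ e, p e := by
        rw [hexpand]
        refine (norm_sum_le _ _).trans_eq (Finset.sum_congr rfl fun e _ => ?_)
        rw [norm_mul, norm_mul, H.norm_sum_S_one_mul_t_mul_S_bar_div,
          H.norm_sum_S_one_mul_conj_t_mul_S_div, Complex.norm_real, Real.norm_of_nonneg (hp e),
          one_mul, one_mul]

end ModularDatum

theorem conformal_inclusion_branching_general {A I E : Type*}
    [Fintype A] [DecidableEq A] [Fintype I] [Fintype E]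
    (H : ModularDatum A)
    (X : A → A → ℝ) (B : I → A → ℝ)
    (m l : E → A) (p : E → ℝ)
    (hp : ∀ e, 0 ≤ p e) (hpsum : ∑ e, p e = 1)
    (ha : ∀ μ lam, (X μ lam : ℂ) =
      ∑ e, (H.S (H.bar μ) (m e) / H.S H.one (m e)) *
           (H.S lam (l e) / H.S H.one (l e)) * (p e : ℂ))
    (hb : ∀ μ lam, X μ lam ≠ 0 → H.ω μ = H.ω lam)
    (hc : ∀ μ lam, ∑ i, B i μ * B i lam ≤ X μ lam)
    (hd : ∑ i, ∑ μ, ∑ lam,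
      H.S H.one μ * (B i μ : ℂ) * (B i lam : ℂ) * H.S H.one lam = 1) :
    ∀ μ lam, X μ lam = ∑ i, B i μ * B i lam := by
  have hB : ∑ μ, ∑ lam, H.s μ * (∑ i, B i μ * B i lam) * H.s lam = 1 := by
    simp only [H.S_one_eq] at hd
    have hd' : ∑ i, ∑ μ, ∑ lam, H.s μ * B i μ * B i lam * H.s lam = 1 := by exact_mod_cast hd
    rw [← hd', ← Finset.sum_comm_cycle]
    simp only [Finset.mul_sum, Finset.sum_mul, mul_assoc]
  have hX : ∑ μ, ∑ lam, H.s μ * X μ lam * H.s lam ≤ 1 :=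
    hpsum ▸ H.sum_s_mul_mul_s_le_sum X m l p hp ha hb
  exact eq_of_le_of_sum_mul_mul_le H.s_pos hc (hX.trans hB.ge)

/-- Theorem 3.7 of the paper (Conjecture 7.1 of Böckenhauer–Evans) in
abstract form: under the spectral decomposition (a), the phase condition (b), the
inequality (c) and the normalization (d), one has `X(μ,λ) = Σ_i B(i,μ)·B(i,λ)`. -/
theorem conformal_inclusion_branching {A I E : Type*}
    [Fintype A] [DecidableEq A] [Fintype I] [Fintype E]
    (H : ModularDatum A)
    (X : A → A → ℝ) (B : I → A → ℝ)
    (hX : ∀ μ lam, 0 ≤ X μ lam) (hB : ∀ i lam, 0 ≤ B i lam)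
    (m l : E → A) (p : E → ℝ)
    (hp : ∀ e, 0 ≤ p e) (hpsum : ∑ e, p e = 1)
    (ha : ∀ μ lam, (X μ lam : ℂ) =
      ∑ e, (H.S (H.bar μ) (m e) / H.S H.one (m e)) *
           (H.S lam (l e) / H.S H.one (l e)) * (p e : ℂ))
    (hb : ∀ μ lam, X μ lam ≠ 0 → H.ω μ = H.ω lam)
    (hc : ∀ μ lam, ∑ i, B i μ * B i lam ≤ X μ lam)
    (hd : ∑ i, ∑ μ, ∑ lam,
      H.S H.one μ * (B i μ : ℂ) * (B i lam : ℂ) * H.S H.one lam = 1) :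
    ∀ μ lam, X μ lam = ∑ i, B i μ * B i lam :=
  conformal_inclusion_branching_general H X B m l p hp hpsum ha hb hc hd
end
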